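/- Let Z be a random variable on a finite sample space with nominal probability vector q (q_ω > 0 for all ω), φ a φ-divergence function, and ρ > 0. Then the worst-case expectation satisfies Lagrangian duality: max{E_p[Z] : I_φ(p,q) ≤ ρ, Σ p_ω = 1, p ≥ 0} = min over λ ≥ 0 and μ ∈ ℝ of μ + ρλ + λ Σ_ω q_ω φ*((Z(ω) − μ)/λ), where for λ = 0 the convention 0·φ*(a/0) = 0 if a ≤ 0 and +∞ if a > 0 applies, provided φ is convex lower semicontinuous with φ(1) = 0 (Slater's condition holds since I_φ(q,q) = 0 < ρ). -/

import Mathlib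

/-!
Weak duality is the Fenchel–Young inequality `a u - λ φ(u) ≤ λ φ*(a / λ)` at `u = p ω / q ω`,
summed against `q`. For strong duality, the optimal value `V(t)` of the problem with divergence
budget `t` is concave in `t`, and the Slater point `q` (with `I_φ(q, q) = 0 < ρ`) puts `ρ` in the
interior of its domain, so `V` has a supergradient `λ ≥ 0` at `ρ`. The same argument, applied to the
mass constraint `∑ p = 1` of the penalised problem `sup ∑ p Z - λ I_φ(p, q)` over `p ≥ 0`, gives
`μ`. The resulting Lagrangian `∑ p (Z - μ) - λ I_φ(p, q)` is separable in `u ω = p ω / q ω`, and its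
supremum over `u ≥ 0` is `∑ q ω λ φ*((Z ω - μ) / λ)`; hence `(λ, μ)` has dual value at most `V(ρ)`.
-/

open Set

@[norm_cast]
lemma EReal.coe_finset_sum {ι : Type*} (s : Finset ι) (f : ι → ℝ) :
    ((∑ i ∈ s, f i : ℝ) : EReal) = ∑ i ∈ s, (f i : EReal) :=
  map_sum (⟨⟨Real.toEReal, EReal.coe_zero⟩, EReal.coe_add⟩ : ℝ →+ EReal) f s

lemma EReal.coe_csSup_image {α : Type*} {f : α → ℝ} {s : Set α} (hs : s.Nonempty)
    (hf : BddAbove (f '' s)) : ((sSup (f '' s) : ℝ) : EReal) = ⨆ x : s, (f x : EReal) := by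
  rw [EReal.coe_strictMono.monotone.map_csSup_of_continuousAt
    continuous_coe_real_ereal.continuousAt (hs.image f) hf, ← image_comp, sSup_image']
  rfl

lemma EReal.coe_mul_iSup {ι : Sort*} {c : ℝ} (hc : 0 < c) (f : ι → EReal) :
    (c : EReal) * ⨆ i, f i = ⨆ i, (c : EReal) * f i := by
  have hc' : (0 : EReal) < c := EReal.coe_pos.2 hc
  refine le_antisymm ?_ (iSup_le fun i => mul_le_mul_of_nonneg_left (le_iSup f i) hc'.le)
  rw [mul_comm, ← EReal.le_div_iff_mul_le hc' (EReal.coe_ne_top c)]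
  refine iSup_le fun i => ?_
  rw [EReal.le_div_iff_mul_le hc' (EReal.coe_ne_top c), mul_comm]
  exact le_iSup (fun i => (c : EReal) * f i) i

lemma ConvexOn.add_rightDeriv_mul_sub_le {S : Set ℝ} {f : ℝ → ℝ} (hf : ConvexOn ℝ S f) {x y : ℝ}
    (hx : x ∈ interior S) (hy : y ∈ S) :
    f x + derivWithin f (Ioi x) x * (y - x) ≤ f y := by
  rcases lt_trichotomy y x with hyx | rfl | hxy
  · have h := (hf.slope_le_leftDeriv_of_mem_interior hy hx hyx).trans
      (hf.leftDeriv_le_rightDeriv_of_mem_interior hx)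
    rw [slope_def_field, div_le_iff₀ (sub_pos.2 hyx)] at h
    linarith
  · simp
  · have h := hf.rightDeriv_le_slope_of_mem_interior hx hy hxy
    rw [slope_def_field, le_div_iff₀ (sub_pos.2 hxy)] at h
    linarith

lemma ConcaveOn.exists_le_add_mul_sub {S : Set ℝ} {f : ℝ → ℝ} (hf : ConcaveOn ℝ S f) {x : ℝ}
    (hx : x ∈ interior S) : ∃ g : ℝ, ∀ y ∈ S, f y ≤ f x + g * (y - x) := by
  refine ⟨-derivWithin (-f) (Ioi x) x, fun y hy => ?_⟩
  have := hf.neg.add_rightDeriv_mul_sub_le hx hy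
  simp only [Pi.neg_apply] at this
  linarith

section ValueFunction

variable {E : Type*} {G : Set (E × ℝ)} {f : E → ℝ}

noncomputable def valueFunction (G : Set (E × ℝ)) (f : E → ℝ) (t : ℝ) : ℝ :=
  sSup (f '' {x | (x, t) ∈ G})

lemma le_valueFunction {x : E} {t : ℝ} (hbdd : BddAbove (f '' {x | (x, t) ∈ G}))
    (h : (x, t) ∈ G) : f x ≤ valueFunction G f t :=
  le_csSup hbdd (mem_image_of_mem f h)

variable [AddCommGroup E] [Module ℝ E]

lemma concaveOn_valueFunction (hG : Convex ℝ G) (hf : ConcaveOn ℝ (Prod.fst '' G) f)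
    (hbdd : ∀ t, BddAbove (f '' {x | (x, t) ∈ G})) :
    ConcaveOn ℝ (Prod.snd '' G) (valueFunction G f) := by
  refine ⟨hG.linear_image (LinearMap.snd ℝ E ℝ), ?_⟩
  rintro _ ⟨⟨x₁, t₁⟩, h₁, rfl⟩ _ ⟨⟨x₂, t₂⟩, h₂, rfl⟩ a b ha hb hab
  have hne : ∀ {x t}, (x, t) ∈ G → (f '' {x | (x, t) ∈ G}).Nonempty :=
    fun h => ⟨_, mem_image_of_mem f h⟩
  simp only [valueFunction]
  rw [← Real.sSup_smul_of_nonneg ha, ← Real.sSup_smul_of_nonneg hb,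
    ← csSup_add (hne h₁).smul_set ((hbdd _).smul_of_nonneg ha)
      (hne h₂).smul_set ((hbdd _).smul_of_nonneg hb)]
  refine csSup_le ((hne h₁).smul_set.add (hne h₂).smul_set) ?_
  rintro _ ⟨_, ⟨_, ⟨y₁, hy₁, rfl⟩, rfl⟩, _, ⟨_, ⟨y₂, hy₂, rfl⟩, rfl⟩, rfl⟩
  have hmem : (a • y₁ + b • y₂, a • t₁ + b • t₂) ∈ G := hG hy₁ hy₂ ha hb hab
  exact (hf.2 ⟨_, hy₁, rfl⟩ ⟨_, hy₂, rfl⟩ ha hb hab).trans (le_csSup (hbdd _) ⟨_, hmem, rfl⟩)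

lemma exists_le_valueFunction_add_mul_sub (hG : Convex ℝ G) (hf : ConcaveOn ℝ (Prod.fst '' G) f)
    (hbdd : ∀ t, BddAbove (f '' {x | (x, t) ∈ G})) {t₀ : ℝ} (ht₀ : t₀ ∈ interior (Prod.snd '' G)) :
    ∃ g : ℝ, ∀ x t, (x, t) ∈ G → f x ≤ valueFunction G f t₀ + g * (t - t₀) := by
  obtain ⟨g, hg⟩ := (concaveOn_valueFunction hG hf hbdd).exists_le_add_mul_sub ht₀
  exact ⟨g, fun x t h => (le_valueFunction (hbdd t) h).trans (hg t ⟨_, h, rfl⟩)⟩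

end ValueFunction

section LagrangeMultipliers

variable {E : Type*} [AddCommGroup E] [Module ℝ E] {K : Set E} {f : E → ℝ}

theorem exists_multiplier_of_slater (hf : ConcaveOn ℝ K f) {c : E → ℝ}
    (hc : ConvexOn ℝ K c) (hbdd : BddAbove (f '' K)) {x₀ : E} (hx₀ : x₀ ∈ K) {ρ : ℝ}
    (hρ : c x₀ < ρ) :
    ∃ l : ℝ, 0 ≤ l ∧ ∀ x ∈ K, f x - l * c x ≤ sSup (f '' {x ∈ K | c x ≤ ρ}) - l * ρ := by
  set G : Set (E × ℝ) := {p | p.1 ∈ K ∧ c p.1 ≤ p.2}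
  have hG : Convex ℝ G := hc.convex_epigraph
  have hfG : ConcaveOn ℝ (Prod.fst '' G) f :=
    hf.subset (by rintro _ ⟨p, hp, rfl⟩; exact hp.1) (hG.linear_image (LinearMap.fst ℝ E ℝ))
  have hbddG : ∀ t, BddAbove (f '' {x | (x, t) ∈ G}) :=
    fun t => hbdd.mono (image_mono fun x hx => hx.1)
  have hint : ρ ∈ interior (Prod.snd '' G) := mem_interior_iff_mem_nhds.2 <|
    Filter.mem_of_superset (Ioi_mem_nhds hρ) fun t (ht : c x₀ < t) => ⟨(x₀, t), ⟨hx₀, ht.le⟩, rfl⟩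
  obtain ⟨l, hl⟩ := exists_le_valueFunction_add_mul_sub hG hfG hbddG hint
  set V := sSup (f '' {x ∈ K | c x ≤ ρ})
  change ∀ x t, (x, t) ∈ G → f x ≤ V + l * (t - ρ) at hl
  refine ⟨l, ?_, fun x hx => by linarith [hl x (c x) ⟨hx, le_rfl⟩]⟩
  -- the value function is nondecreasing, so its supergradient is nonnegative
  by_contra! hneg
  have hV : f x₀ ≤ V := le_csSup (hbddG ρ) ⟨x₀, ⟨hx₀, hρ.le⟩, rfl⟩
  have hs : 0 < (V - f x₀ + 1) / -l := div_pos (by linarith) (by linarith)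
  have h := hl x₀ (ρ + (V - f x₀ + 1) / -l) ⟨hx₀, by linarith⟩
  rw [add_sub_cancel_left, mul_div_assoc', div_neg, mul_div_cancel_left₀ _ hneg.ne] at h
  linarith

theorem exists_multiplier_of_linear_eq (hK : Convex ℝ K) (hf : ConcaveOn ℝ K f) (g : E →ₗ[ℝ] ℝ)
    (hbdd : ∀ t, BddAbove (f '' {x ∈ K | g x = t})) {t₀ : ℝ} (ht₀ : t₀ ∈ interior (g '' K)) :
    ∃ μ : ℝ, ∀ x ∈ K, f x ≤ sSup (f '' {x ∈ K | g x = t₀}) + μ * (g x - t₀) := by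
  set G : Set (E × ℝ) := {p | p.1 ∈ K ∧ g p.1 = p.2}
  have hG : Convex ℝ G := by
    rintro ⟨x, s⟩ ⟨hx, hs : g x = s⟩ ⟨y, r⟩ ⟨hy, hr : g y = r⟩ a b ha hb hab
    exact ⟨hK hx hy ha hb hab, by simp [hs, hr]⟩
  have hfst : Prod.fst '' G = K := by
    ext x; exact ⟨by rintro ⟨p, hp, rfl⟩; exact hp.1, fun hx => ⟨(x, g x), ⟨hx, rfl⟩, rfl⟩⟩
  have hsnd : Prod.snd '' G = g '' K := by
    ext t
    exact ⟨by rintro ⟨⟨x, s⟩, ⟨hx, hs : g x = s⟩, rfl⟩; exact ⟨x, hx, hs⟩,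
      by rintro ⟨x, hx, rfl⟩; exact ⟨(x, g x), ⟨hx, rfl⟩, rfl⟩⟩
  obtain ⟨μ, hμ⟩ := exists_le_valueFunction_add_mul_sub hG (hfst ▸ hf) hbdd (hsnd ▸ ht₀)
  exact ⟨μ, fun x hx => hμ x (g x) ⟨hx, rfl⟩⟩

end LagrangeMultipliers

lemma bddAbove_range_of_sum_mul_le {ι β : Type*} [Fintype ι] [DecidableEq ι] [Nonempty β]
    {w : ι → ℝ} (hw : ∀ i, 0 < w i) {h : ι → β → ℝ} {C : ℝ}
    (H : ∀ u : ι → β, ∑ i, w i * h i (u i) ≤ C) (i : ι) : BddAbove (range (h i)) := by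
  obtain ⟨b₀⟩ := ‹Nonempty β›
  refine ⟨(C - ∑ j ∈ Finset.univ.erase i, w j * h j b₀) / w i, ?_⟩
  rintro _ ⟨b, rfl⟩
  have hb := H (Function.update (fun _ => b₀) i b)
  rw [← Finset.add_sum_erase _ _ (Finset.mem_univ i), Function.update_self,
    Finset.sum_congr rfl fun j hj => by rw [Function.update_of_ne (Finset.ne_of_mem_erase hj)]]
    at hb
  rw [le_div_iff₀ (hw i)]
  linarith

lemma sum_mul_iSup_le_of_forall_sum_mul_le {ι β : Type*} [Fintype ι] [Nonempty β]
    {w : ι → ℝ} (hw : ∀ i, 0 < w i) {h : ι → β → ℝ} {C : ℝ}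
    (H : ∀ u : ι → β, ∑ i, w i * h i (u i) ≤ C) :
    ∑ i, (w i : EReal) * ⨆ b, (h i b : EReal) ≤ C := by
  classical
  have hbdd := bddAbove_range_of_sum_mul_le hw H
  have hcoe : ∀ i, ⨆ b, (h i b : EReal) = ((⨆ b, h i b : ℝ) : EReal) := fun i =>
    (EReal.coe_strictMono.monotone.map_ciSup_of_continuousAt
      continuous_coe_real_ereal.continuousAt (hbdd i)).symm
  simp_rw [hcoe, ← EReal.coe_mul, ← EReal.coe_finset_sum, EReal.coe_le_coe_iff]
  refine le_of_forall_pos_le_add fun ε hε => ?_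
  have hW : 0 ≤ ∑ i, w i := Finset.sum_nonneg fun i _ => (hw i).le
  set δ := ε / (∑ i, w i + 1)
  have hδ : 0 < δ := div_pos hε (by linarith)
  choose u hu using fun i => exists_lt_of_lt_ciSup (sub_lt_self (⨆ b, h i b) hδ)
  calc ∑ i, w i * ⨆ b, h i b ≤ ∑ i, w i * (h i (u i) + δ) :=
        Finset.sum_le_sum fun i _ => mul_le_mul_of_nonneg_left (by linarith [hu i]) (hw i).le
    _ = ∑ i, w i * h i (u i) + (∑ i, w i) * δ := by
        simp only [mul_add, Finset.sum_add_distrib, Finset.sum_mul]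
    _ ≤ C + ε := by
        have : (∑ i, w i) * δ ≤ ε := by
          rw [mul_div_assoc', div_le_iff₀ (by linarith)]; nlinarith
        linarith [H u]

section PhiDivergence

variable {ι : Type*} [Fintype ι] {φ : ℝ → ℝ} {p q : ι → ℝ}

/-- The paper's `I_φ(p, q)`. -/
noncomputable def phiDivergence (φ : ℝ → ℝ) (p q : ι → ℝ) : ℝ := ∑ ω, q ω * φ (p ω / q ω)

lemma phiDivergence_self (hφ : φ 1 = 0) (hq : ∀ ω, q ω ≠ 0) : phiDivergence φ q q = 0 :=
  Finset.sum_eq_zero fun ω _ => by rw [div_self (hq ω), hφ, mul_zero]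

lemma convexOn_phiDivergence (hφ : ConvexOn ℝ (Ici 0) φ) (hq : ∀ ω, 0 < q ω) :
    ConvexOn ℝ (Ici 0) (phiDivergence φ · q) := by
  refine ⟨convex_Ici 0, fun p₁ hp₁ p₂ hp₂ a b ha hb hab => ?_⟩
  simp only [phiDivergence, smul_eq_mul, Finset.mul_sum, ← Finset.sum_add_distrib]
  refine Finset.sum_le_sum fun ω _ => ?_
  have hmix : (a • p₁ + b • p₂) ω / q ω = a * (p₁ ω / q ω) + b * (p₂ ω / q ω) := by
    simp only [Pi.add_apply, Pi.smul_apply, smul_eq_mul]; ring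
  have h := hφ.2 (div_nonneg (hp₁ ω) (hq ω).le) (div_nonneg (hp₂ ω) (hq ω).le) ha hb hab
  simp only [smul_eq_mul] at h
  rw [hmix]
  linarith [mul_le_mul_of_nonneg_left h (hq ω).le]

lemma le_phiDivergence (hφ : ConvexOn ℝ (Ici 0) φ) (hq : ∀ ω, 0 < q ω) (hqsum : ∑ ω, q ω = 1)
    (hp : 0 ≤ p) : φ (∑ ω, p ω) ≤ phiDivergence φ p q := by
  have h := hφ.map_sum_le (t := Finset.univ) (w := q) (p := fun ω => p ω / q ω)
    (fun ω _ => (hq ω).le) hqsum fun ω _ => div_nonneg (hp ω) (hq ω).le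
  simpa only [phiDivergence, smul_eq_mul, mul_div_cancel₀ _ (hq _).ne'] using h

lemma sum_mul_sub_eq_sub_phiDivergence (hq : ∀ ω, q ω ≠ 0) (a : ι → ℝ) (l : ℝ) :
    ∑ ω, q ω * (a ω * (p ω / q ω) - l * φ (p ω / q ω)) =
      ∑ ω, a ω * p ω - l * phiDivergence φ p q := by
  simp only [phiDivergence, mul_sub, Finset.sum_sub_distrib, Finset.mul_sum]
  congr 1 <;> refine Finset.sum_congr rfl fun ω _ => ?_
  · field_simp [hq ω]
  · ring

end PhiDivergence

section Duality

variable {ι : Type*} [Fintype ι] {φ : ℝ → ℝ} {φstar : ℝ → EReal} {q Z : ι → ℝ} {ρ : ℝ}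

/-- The paper's `λ φ*(a / λ)`, with the convention `0 φ*(a / 0) = 0` for `a ≤ 0` and `⊤` for
`a > 0`. -/
noncomputable def conjPerspective (φstar : ℝ → EReal) (l a : ℝ) : EReal :=
  if l = 0 then (if a ≤ 0 then 0 else ⊤) else (l : EReal) * φstar (a / l)

noncomputable def dualObjective (φstar : ℝ → EReal) (q Z : ι → ℝ) (ρ l μ : ℝ) : EReal :=
  ((μ + ρ * l : ℝ) : EReal) + ∑ ω, (q ω : EReal) * conjPerspective φstar l (Z ω - μ)

lemma conjPerspective_eq_iSup
    (hφstar : ∀ s, φstar s = ⨆ u : {u : ℝ // 0 ≤ u}, ((s * u.1 - φ u.1 : ℝ) : EReal))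
    {l : ℝ} (hl : 0 ≤ l) (a : ℝ) :
    conjPerspective φstar l a = ⨆ u : {u : ℝ // 0 ≤ u}, ((a * u.1 - l * φ u.1 : ℝ) : EReal) := by
  rcases hl.eq_or_lt with rfl | hl
  · simp only [conjPerspective, if_true, zero_mul, sub_zero]
    split_ifs with ha
    · exact le_antisymm (le_iSup_of_le ⟨0, le_rfl⟩ (by simp))
        (iSup_le fun u => EReal.coe_nonpos.2 (mul_nonpos_of_nonpos_of_nonneg ha u.2))
    · refine ((EReal.eq_top_iff_forall_lt _).2 fun y =>
        lt_iSup_iff.2 ⟨⟨(|y| + 1) / a, ?_⟩, ?_⟩).symm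
      · rw [EReal.coe_lt_coe_iff, mul_div_cancel₀ _ (not_le.1 ha).ne']
        linarith [le_abs_self y]
      · exact div_nonneg (by positivity) (not_le.1 ha).le
  · rw [conjPerspective, if_neg hl.ne', hφstar, EReal.coe_mul_iSup hl]
    refine iSup_congr fun u => ?_
    rw [← EReal.coe_mul]
    congr 1
    field_simp

lemma coe_sum_mul_le_dualObjective
    (hφstar : ∀ s, φstar s = ⨆ u : {u : ℝ // 0 ≤ u}, ((s * u.1 - φ u.1 : ℝ) : EReal))
    (hq : ∀ ω, 0 < q ω) {l : ℝ} (hl : 0 ≤ l) (μ : ℝ)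
    {p : ι → ℝ} (hp : 0 ≤ p) (hpsum : ∑ ω, p ω = 1) (hpρ : phiDivergence φ p q ≤ ρ) :
    ((∑ ω, p ω * Z ω : ℝ) : EReal) ≤ dualObjective φstar q Z ρ l μ := by
  have hreal : ∑ ω, p ω * Z ω ≤
      μ + ρ * l + ∑ ω, q ω * ((Z ω - μ) * (p ω / q ω) - l * φ (p ω / q ω)) := by
    rw [sum_mul_sub_eq_sub_phiDivergence fun ω => (hq ω).ne']
    simp only [sub_mul, Finset.sum_sub_distrib, ← Finset.mul_sum, hpsum, mul_comm (Z _)]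
    nlinarith [mul_le_mul_of_nonneg_left hpρ hl]
  refine (EReal.coe_le_coe_iff.2 hreal).trans ?_
  rw [EReal.coe_add, EReal.coe_finset_sum, dualObjective]
  refine add_le_add_right (Finset.sum_le_sum fun ω _ => ?_) _
  rw [EReal.coe_mul, conjPerspective_eq_iSup hφstar hl]
  exact mul_le_mul_of_nonneg_left (le_iSup_of_le ⟨p ω / q ω, div_nonneg (hp ω) (hq ω).le⟩ le_rfl)
    (EReal.coe_nonneg.2 (hq ω).le)

lemma dualObjective_le
    (hφstar : ∀ s, φstar s = ⨆ u : {u : ℝ // 0 ≤ u}, ((s * u.1 - φ u.1 : ℝ) : EReal))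
    (hq : ∀ ω, 0 < q ω) {l : ℝ} (hl : 0 ≤ l) {μ v : ℝ}
    (H : ∀ p : ι → ℝ, 0 ≤ p → ∑ ω, (Z ω - μ) * p ω - l * phiDivergence φ p q ≤ v - μ - ρ * l) :
    dualObjective φstar q Z ρ l μ ≤ v := by
  have : Nonempty {u : ℝ // 0 ≤ u} := ⟨⟨0, le_rfl⟩⟩
  have hsum : ∑ ω, (q ω : EReal) * conjPerspective φstar l (Z ω - μ) ≤
      ((v - μ - ρ * l : ℝ) : EReal) := by
    simp_rw [conjPerspective_eq_iSup hφstar hl]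
    refine sum_mul_iSup_le_of_forall_sum_mul_le hq fun u => ?_
    have h := sum_mul_sub_eq_sub_phiDivergence (p := fun ω => q ω * u ω) (φ := φ)
      (fun ω => (hq ω).ne') (fun ω => Z ω - μ) l
    simp only [mul_div_cancel_left₀ _ (hq _).ne'] at h
    rw [h]
    exact H _ fun ω => mul_nonneg (hq ω).le (u ω).2
  calc dualObjective φstar q Z ρ l μ
      ≤ ((μ + ρ * l : ℝ) : EReal) + ((v - μ - ρ * l : ℝ) : EReal) := add_le_add_right hsum _
    _ = v := by rw [← EReal.coe_add]; congr 1; ring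

end Duality

section DualMultipliers

variable {ι : Type*} [Fintype ι] {φ : ℝ → ℝ} {q : ι → ℝ}

lemma sum_mul_le_sum_mul_sum_abs {p : ι → ℝ} (hp : 0 ≤ p) (Z : ι → ℝ) :
    ∑ ω, p ω * Z ω ≤ (∑ ω, p ω) * ∑ ω, |Z ω| := by
  rw [Finset.sum_mul]
  exact Finset.sum_le_sum fun ω _ => mul_le_mul_of_nonneg_left ((le_abs_self _).trans
    (Finset.single_le_sum (fun i _ => abs_nonneg (Z i)) (Finset.mem_univ ω))) (hp ω)

lemma concaveOn_sum_mul {s : Set (ι → ℝ)} (hs : Convex ℝ s) (Z : ι → ℝ) :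
    ConcaveOn ℝ s fun p => ∑ ω, p ω * Z ω :=
  (Fintype.linearCombination ℝ Z).concaveOn hs

lemma bddAbove_sum_mul_image_stdSimplex (Z : ι → ℝ) :
    BddAbove ((fun p => ∑ ω, p ω * Z ω) '' stdSimplex ℝ ι) := by
  refine ⟨∑ ω, |Z ω|, ?_⟩
  rintro _ ⟨p, hp, rfl⟩
  simpa only [hp.2, one_mul] using sum_mul_le_sum_mul_sum_abs hp.1 Z

theorem exists_mass_multiplier (hφ : ConvexOn ℝ (Ici 0) φ) (hq : ∀ ω, 0 < q ω)
    (hqsum : ∑ ω, q ω = 1) (Z : ι → ℝ) {l : ℝ} (hl : 0 ≤ l) {C : ℝ}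
    (hC : ∀ p ∈ stdSimplex ℝ ι, ∑ ω, p ω * Z ω - l * phiDivergence φ p q ≤ C) :
    ∃ μ, ∀ p : ι → ℝ, 0 ≤ p → ∑ ω, (Z ω - μ) * p ω - l * phiDivergence φ p q ≤ C - μ := by
  set F : (ι → ℝ) → ℝ := fun p => ∑ ω, p ω * Z ω - l * phiDivergence φ p q
  have hF : ConcaveOn ℝ (Ici 0) F :=
    (concaveOn_sum_mul (convex_Ici 0) Z).sub
      ((convexOn_phiDivergence hφ hq).smul hl)
  set g : (ι → ℝ) →ₗ[ℝ] ℝ := Fintype.linearCombination ℝ fun _ => 1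
  have hg : ∀ p, g p = ∑ ω, p ω := by simp [g, Fintype.linearCombination_apply]
  have hbdd : ∀ t, BddAbove (F '' {p ∈ Ici 0 | g p = t}) := by
    refine fun t => ⟨t * ∑ ω, |Z ω| - l * φ t, ?_⟩
    rintro _ ⟨p, ⟨hp, hpt⟩, rfl⟩
    rw [hg] at hpt
    have h₁ := sum_mul_le_sum_mul_sum_abs hp Z
    have h₂ := mul_le_mul_of_nonneg_left (le_phiDivergence hφ hq hqsum hp) hl
    simp only [F, ← hpt]
    linarith
  have hint : (1 : ℝ) ∈ interior (g '' Ici 0) := mem_interior_iff_mem_nhds.2 <|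
    Filter.mem_of_superset (Ioi_mem_nhds one_pos) fun t (ht : 0 < t) =>
      ⟨t • q, mem_Ici.2 (smul_nonneg ht.le fun ω => (hq ω).le),
        by simp [hg, ← Finset.mul_sum, hqsum]⟩
  obtain ⟨μ, hμ⟩ := exists_multiplier_of_linear_eq (convex_Ici 0) hF g hbdd hint
  have hsup : sSup (F '' {p ∈ Ici 0 | g p = 1}) ≤ C := by
    refine csSup_le ⟨_, ⟨q, ⟨fun ω => (hq ω).le, by rw [hg, hqsum]⟩, rfl⟩⟩ ?_
    rintro _ ⟨p, ⟨hp, hp1⟩, rfl⟩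
    exact hC p ⟨hp, by rwa [hg] at hp1⟩
  refine ⟨μ, fun p hp => ?_⟩
  have h := hμ p hp
  rw [hg] at h
  simp only [F, sub_mul, Finset.sum_sub_distrib, ← Finset.mul_sum, mul_comm (Z _)] at h ⊢
  linarith

theorem exists_dual_multipliers (hφ : ConvexOn ℝ (Ici 0) φ) (hφ1 : φ 1 = 0)
    (hq : ∀ ω, 0 < q ω) (hqsum : ∑ ω, q ω = 1) (Z : ι → ℝ) {ρ : ℝ} (hρ : 0 < ρ) :
    ∃ l, 0 ≤ l ∧ ∃ μ, ∀ p : ι → ℝ, 0 ≤ p →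
      ∑ ω, (Z ω - μ) * p ω - l * phiDivergence φ p q ≤
        sSup ((fun p => ∑ ω, p ω * Z ω) '' {p ∈ stdSimplex ℝ ι | phiDivergence φ p q ≤ ρ})
          - μ - ρ * l := by
  obtain ⟨l, hl, hlag⟩ := exists_multiplier_of_slater
    (concaveOn_sum_mul (convex_stdSimplex ℝ ι) Z)
    ((convexOn_phiDivergence hφ hq).subset (fun p hp => hp.1) (convex_stdSimplex ℝ ι))
    (bddAbove_sum_mul_image_stdSimplex Z) (⟨fun ω => (hq ω).le, hqsum⟩ : q ∈ stdSimplex ℝ ι)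
    (by rwa [phiDivergence_self hφ1 fun ω => (hq ω).ne'])
  obtain ⟨μ, hμ⟩ := exists_mass_multiplier hφ hq hqsum Z hl hlag
  exact ⟨l, hl, μ, fun p hp => (hμ p hp).trans_eq (by ring)⟩

end DualMultipliers

theorem worst_case_expectation_lagrangian_duality_general
    (n : ℕ) (φ : ℝ → ℝ) (φstar : ℝ → EReal)
    (hφconv : ConvexOn ℝ (Set.Ici 0) φ)
    (hφone : φ 1 = 0)
    (hφstar : ∀ s : ℝ, φstar s = ⨆ u : {u : ℝ // 0 ≤ u}, ((s * u.1 - φ u.1 : ℝ) : EReal))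
    (Z q : Fin n → ℝ) (hq : ∀ ω, 0 < q ω) (hqsum : ∑ ω, q ω = 1)
    (ρ : ℝ) (hρ : 0 < ρ) :
    (⨆ p : {p : Fin n → ℝ // (∀ ω, 0 ≤ p ω) ∧ (∑ ω, p ω = 1) ∧
        (∑ ω, q ω * φ (p ω / q ω)) ≤ ρ},
      ((∑ ω, p.1 ω * Z ω : ℝ) : EReal)) =
    (⨅ lm : {lm : ℝ × ℝ // 0 ≤ lm.1},
      ((lm.1.2 + ρ * lm.1.1 : ℝ) : EReal) +
        ∑ ω, ((q ω : ℝ) : EReal) *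
          (if lm.1.1 = 0 then (if Z ω - lm.1.2 ≤ 0 then (0 : EReal) else ⊤)
           else ((lm.1.1 : ℝ) : EReal) * φstar ((Z ω - lm.1.2) / lm.1.1))) := by
  refine le_antisymm (le_iInf fun ⟨(l, μ), hl⟩ => iSup_le fun ⟨p, hp, hpsum, hpρ⟩ =>
    coe_sum_mul_le_dualObjective hφstar hq hl μ hp hpsum hpρ) ?_
  obtain ⟨l, hl, μ, hlag⟩ := exists_dual_multipliers hφconv hφone hq hqsum Z hρ
  have hne : ({p ∈ stdSimplex ℝ (Fin n) | phiDivergence φ p q ≤ ρ}).Nonempty :=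
    ⟨q, ⟨fun ω => (hq ω).le, hqsum⟩, (phiDivergence_self hφone fun ω => (hq ω).ne').trans_le hρ.le⟩
  have hP := EReal.coe_csSup_image hne
    ((bddAbove_sum_mul_image_stdSimplex Z).mono (image_mono fun p hp => hp.1))
  refine iInf_le_of_le ⟨(l, μ), hl⟩ ((dualObjective_le hφstar hq hl hlag).trans (hP.trans_le ?_))
  exact iSup_le fun ⟨p, ⟨hp, hpsum⟩, hpρ⟩ => le_iSup_of_le ⟨p, hp, hpsum, hpρ⟩ le_rfl

/-- Lagrangian (strong) duality for the worst-case expectation over a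
φ-divergence ambiguity set on a finite sample space: the maximum of E_p[Z] over
{p : I_φ(p,q) ≤ ρ, Σp = 1, p ≥ 0} equals the infimum over λ ≥ 0, μ ∈ ℝ of
μ + ρλ + λ Σ_ω q_ω φ*((Z(ω) − μ)/λ), with the convention that for λ = 0 the
term λφ*(a/0) is 0 if a ≤ 0 and +∞ if a > 0. Slater's condition holds since
I_φ(q,q) = 0 < ρ. -/
theorem worst_case_expectation_lagrangian_duality
    (n : ℕ) (φ : ℝ → ℝ) (φstar : ℝ → EReal)
    (hφconv : ConvexOn ℝ (Set.Ici 0) φ)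
    (hφlsc : LowerSemicontinuousOn φ (Set.Ici 0))
    (hφnonneg : ∀ u : ℝ, 0 ≤ u → 0 ≤ φ u)
    (hφone : φ 1 = 0)
    (hφstar : ∀ s : ℝ, φstar s = ⨆ u : {u : ℝ // 0 ≤ u}, ((s * u.1 - φ u.1 : ℝ) : EReal))
    (Z q : Fin n → ℝ) (hq : ∀ ω, 0 < q ω) (hqsum : ∑ ω, q ω = 1)
    (ρ : ℝ) (hρ : 0 < ρ) :
    (⨆ p : {p : Fin n → ℝ // (∀ ω, 0 ≤ p ω) ∧ (∑ ω, p ω = 1) ∧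
        (∑ ω, q ω * φ (p ω / q ω)) ≤ ρ},
      ((∑ ω, p.1 ω * Z ω : ℝ) : EReal)) =
    (⨅ lm : {lm : ℝ × ℝ // 0 ≤ lm.1},
      ((lm.1.2 + ρ * lm.1.1 : ℝ) : EReal) +
        ∑ ω, ((q ω : ℝ) : EReal) *
          (if lm.1.1 = 0 then (if Z ω - lm.1.2 ≤ 0 then (0 : EReal) else ⊤)
           else ((lm.1.1 : ℝ) : EReal) * φstar ((Z ω - lm.1.2) / lm.1.1))) :=
  worst_case_expectation_lagrangian_duality_general n φ φstar hφconv hφone hφstar Z q hq hqsum ρ hρ
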